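/- Let w = exp(2πi/6) and let F₆ be the 6×6 matrix with entries (F₆)_{jk} = w^{(j−1)(k−1)}. For all real numbers a and b, the matrix F₆⁽²⁾(a,b) obtained from F₆ by multiplying the entries in rows 2, 4, 6 and columns 2, 5 by e^{ia}, and the entries in rows 2, 4, 6 and columns 3, 6 by e^{ib} (rows and columns indexed from 1), is a dephased complex Hadamard matrix of order 6. -/

import Mathlib

/-- A complex Hadamard matrix: all entries of modulus one, and `H * Hᴴ = N • 1`. -/
def IsComplexHadamard {n : Type*} [Fintype n] [DecidableEq n] (H : Matrix n n ℂ) : Prop :=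
  (∀ i j, ‖H i j‖ = 1) ∧
    H * H.conjTranspose = (Fintype.card n : ℂ) • (1 : Matrix n n ℂ)

/-- Dephased w.r.t. the distinguished index `i0`. -/
def IsDephased {n : Type*} (H : Matrix n n ℂ) (i0 : n) : Prop :=
  (∀ j, H i0 j = 1) ∧ (∀ i, H i i0 = 1)

/-- The two-parameter family `F₆⁽²⁾(a,b)` stemming from the Fourier matrix `F₆`:
the entry `(F₆)_jk = w^{(j-1)(k-1)}` (with `w = exp(2πi/6)`, here written 0-indexed as
`w^{jk}`) is multiplied by `e^{ia}` when the row belongs to rows 2, 4, 6 and the column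
to columns 2, 5, and by `e^{ib}` when the row belongs to rows 2, 4, 6 and the column to
columns 3, 6 (1-based numbering of rows and columns). -/
noncomputable def F6fam (a b : ℝ) : Matrix (Fin 6) (Fin 6) ℂ :=
  Matrix.of fun j k : Fin 6 =>
    Complex.exp (2 * (Real.pi : ℂ) * Complex.I * (((j : ℕ) * (k : ℕ) : ℕ) : ℂ) / 6) *
      (if (j : ℕ) % 2 = 1 then
        (if (k : ℕ) % 3 = 1 then Complex.exp (Complex.I * a)
         else if (k : ℕ) % 3 = 2 then Complex.exp (Complex.I * b)
         else 1)
       else 1)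

/-! ### Auxiliary material about the primitive sixth root of unity -/

private noncomputable def ζ : ℂ := Complex.exp (Real.pi * Complex.I / 3)

private lemma hz : ζ = 1/2 + (Real.sqrt 3 : ℝ)/2 * Complex.I := by
  rw [ζ, show (Real.pi : ℂ) * Complex.I / 3 = ((Real.pi/3 : ℝ) : ℂ) * Complex.I by push_cast; ring,
    Complex.exp_mul_I]
  rw [← Complex.ofReal_cos, ← Complex.ofReal_sin, Real.cos_pi_div_three, Real.sin_pi_div_three]
  push_cast; ring

private lemma h3 : ((Real.sqrt 3 : ℝ) : ℂ)^2 = 3 := by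
  norm_cast; exact Real.sq_sqrt (by norm_num)

private lemma hrel : ζ^2 = ζ - 1 := by
  rw [hz]; linear_combination (Complex.I^2/4) * h3 + (3/4 : ℂ) * Complex.I_sq

private lemma hconjζ : (starRingEnd ℂ) ζ = 1 - ζ := by
  rw [hz]
  simp only [map_add, map_mul, map_div₀, map_ofNat, map_one, Complex.conj_I, Complex.conj_ofReal]
  ring

private lemma hz3 : ζ^3 = -1 := by linear_combination (ζ+1) * hrel
private lemma hz4 : ζ^4 = -ζ := by linear_combination (ζ^2+ζ) * hrel
private lemma hz5 : ζ^5 = 1-ζ := by linear_combination (ζ^3+ζ^2-1) * hrel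
private lemma hz6 : ζ^6 = 1 := by linear_combination (ζ^4+ζ^3-ζ-1) * hrel

private lemma hpow (n : ℕ) :
    Complex.exp (2 * (Real.pi : ℂ) * Complex.I * (n : ℂ) / 6) = ζ^n := by
  rw [ζ, ← Complex.exp_nat_mul]; congr 1; push_cast; ring

private lemma hmod (n : ℕ) : ζ^n = ζ^(n % 6) := by
  conv_lhs => rw [← Nat.div_add_mod n 6, pow_add, pow_mul, hz6, one_pow, one_mul]

private lemma habsζ : ‖ζ‖ = 1 := by
  rw [ζ, Complex.norm_exp]
  norm_num [Complex.div_re, Complex.mul_re, Complex.normSq]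

private lemma starexp (r : ℝ) : (starRingEnd ℂ) (Complex.exp (Complex.I * r)) =
    (Complex.exp (Complex.I * r))⁻¹ := by
  rw [← Complex.exp_conj, ← Complex.exp_neg]
  congr 1
  simp [Complex.conj_I, Complex.conj_ofReal]

private lemma F6_apply (a b : ℝ) (j k : Fin 6) : F6fam a b j k =
    ζ^((j : ℕ) * (k : ℕ)) *
      (if (j : ℕ) % 2 = 1 then
        (if (k : ℕ) % 3 = 1 then Complex.exp (Complex.I * a)
         else if (k : ℕ) % 3 = 2 then Complex.exp (Complex.I * b)
         else 1)
       else 1) := by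
  rw [F6fam]
  simp only [Matrix.of_apply]
  rw [hpow]

private lemma Z2 : ζ^2 = (ζ - 1) := by rw [hmod] <;> norm_num [hrel, hz3, hz4, hz5]
private lemma Z3 : ζ^3 = (-1) := by rw [hmod] <;> norm_num [hrel, hz3, hz4, hz5]
private lemma Z4 : ζ^4 = (-ζ) := by rw [hmod] <;> norm_num [hrel, hz3, hz4, hz5]
private lemma Z5 : ζ^5 = (1 - ζ) := by rw [hmod] <;> norm_num [hrel, hz3, hz4, hz5]
private lemma Z6 : ζ^6 = 1 := by rw [hmod] <;> norm_num [hrel, hz3, hz4, hz5]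
private lemma Z7 : ζ^7 = ζ := by rw [hmod] <;> norm_num [hrel, hz3, hz4, hz5]
private lemma Z8 : ζ^8 = (ζ - 1) := by rw [hmod] <;> norm_num [hrel, hz3, hz4, hz5]
private lemma Z9 : ζ^9 = (-1) := by rw [hmod] <;> norm_num [hrel, hz3, hz4, hz5]
private lemma Z10 : ζ^10 = (-ζ) := by rw [hmod] <;> norm_num [hrel, hz3, hz4, hz5]
private lemma Z11 : ζ^11 = (1 - ζ) := by rw [hmod] <;> norm_num [hrel, hz3, hz4, hz5]
private lemma Z12 : ζ^12 = 1 := by rw [hmod] <;> norm_num [hrel, hz3, hz4, hz5]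
private lemma Z13 : ζ^13 = ζ := by rw [hmod] <;> norm_num [hrel, hz3, hz4, hz5]
private lemma Z14 : ζ^14 = (ζ - 1) := by rw [hmod] <;> norm_num [hrel, hz3, hz4, hz5]
private lemma Z15 : ζ^15 = (-1) := by rw [hmod] <;> norm_num [hrel, hz3, hz4, hz5]
private lemma Z16 : ζ^16 = (-ζ) := by rw [hmod] <;> norm_num [hrel, hz3, hz4, hz5]
private lemma Z17 : ζ^17 = (1 - ζ) := by rw [hmod] <;> norm_num [hrel, hz3, hz4, hz5]
private lemma Z18 : ζ^18 = 1 := by rw [hmod] <;> norm_num [hrel, hz3, hz4, hz5]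
private lemma Z19 : ζ^19 = ζ := by rw [hmod] <;> norm_num [hrel, hz3, hz4, hz5]
private lemma Z20 : ζ^20 = (ζ - 1) := by rw [hmod] <;> norm_num [hrel, hz3, hz4, hz5]
private lemma Z21 : ζ^21 = (-1) := by rw [hmod] <;> norm_num [hrel, hz3, hz4, hz5]
private lemma Z22 : ζ^22 = (-ζ) := by rw [hmod] <;> norm_num [hrel, hz3, hz4, hz5]
private lemma Z23 : ζ^23 = (1 - ζ) := by rw [hmod] <;> norm_num [hrel, hz3, hz4, hz5]
private lemma Z24 : ζ^24 = 1 := by rw [hmod] <;> norm_num [hrel, hz3, hz4, hz5]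
private lemma Z25 : ζ^25 = ζ := by rw [hmod] <;> norm_num [hrel, hz3, hz4, hz5]
private lemma W2 : (1-ζ)^2 = (-ζ) := by rw [show (1-ζ) = ζ^5 from hz5.symm, ← pow_mul, hmod] <;> norm_num [hrel, hz3, hz4, hz5]
private lemma W3 : (1-ζ)^3 = (-1) := by rw [show (1-ζ) = ζ^5 from hz5.symm, ← pow_mul, hmod] <;> norm_num [hrel, hz3, hz4, hz5]
private lemma W4 : (1-ζ)^4 = (ζ - 1) := by rw [show (1-ζ) = ζ^5 from hz5.symm, ← pow_mul, hmod] <;> norm_num [hrel, hz3, hz4, hz5]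
private lemma W5 : (1-ζ)^5 = ζ := by rw [show (1-ζ) = ζ^5 from hz5.symm, ← pow_mul, hmod] <;> norm_num [hrel, hz3, hz4, hz5]
private lemma W6 : (1-ζ)^6 = 1 := by rw [show (1-ζ) = ζ^5 from hz5.symm, ← pow_mul, hmod] <;> norm_num [hrel, hz3, hz4, hz5]
private lemma W7 : (1-ζ)^7 = (1 - ζ) := by rw [show (1-ζ) = ζ^5 from hz5.symm, ← pow_mul, hmod] <;> norm_num [hrel, hz3, hz4, hz5]
private lemma W8 : (1-ζ)^8 = (-ζ) := by rw [show (1-ζ) = ζ^5 from hz5.symm, ← pow_mul, hmod] <;> norm_num [hrel, hz3, hz4, hz5]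
private lemma W9 : (1-ζ)^9 = (-1) := by rw [show (1-ζ) = ζ^5 from hz5.symm, ← pow_mul, hmod] <;> norm_num [hrel, hz3, hz4, hz5]
private lemma W10 : (1-ζ)^10 = (ζ - 1) := by rw [show (1-ζ) = ζ^5 from hz5.symm, ← pow_mul, hmod] <;> norm_num [hrel, hz3, hz4, hz5]
private lemma W11 : (1-ζ)^11 = ζ := by rw [show (1-ζ) = ζ^5 from hz5.symm, ← pow_mul, hmod] <;> norm_num [hrel, hz3, hz4, hz5]
private lemma W12 : (1-ζ)^12 = 1 := by rw [show (1-ζ) = ζ^5 from hz5.symm, ← pow_mul, hmod] <;> norm_num [hrel, hz3, hz4, hz5]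
private lemma W13 : (1-ζ)^13 = (1 - ζ) := by rw [show (1-ζ) = ζ^5 from hz5.symm, ← pow_mul, hmod] <;> norm_num [hrel, hz3, hz4, hz5]
private lemma W14 : (1-ζ)^14 = (-ζ) := by rw [show (1-ζ) = ζ^5 from hz5.symm, ← pow_mul, hmod] <;> norm_num [hrel, hz3, hz4, hz5]
private lemma W15 : (1-ζ)^15 = (-1) := by rw [show (1-ζ) = ζ^5 from hz5.symm, ← pow_mul, hmod] <;> norm_num [hrel, hz3, hz4, hz5]
private lemma W16 : (1-ζ)^16 = (ζ - 1) := by rw [show (1-ζ) = ζ^5 from hz5.symm, ← pow_mul, hmod] <;> norm_num [hrel, hz3, hz4, hz5]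
private lemma W17 : (1-ζ)^17 = ζ := by rw [show (1-ζ) = ζ^5 from hz5.symm, ← pow_mul, hmod] <;> norm_num [hrel, hz3, hz4, hz5]
private lemma W18 : (1-ζ)^18 = 1 := by rw [show (1-ζ) = ζ^5 from hz5.symm, ← pow_mul, hmod] <;> norm_num [hrel, hz3, hz4, hz5]
private lemma W19 : (1-ζ)^19 = (1 - ζ) := by rw [show (1-ζ) = ζ^5 from hz5.symm, ← pow_mul, hmod] <;> norm_num [hrel, hz3, hz4, hz5]
private lemma W20 : (1-ζ)^20 = (-ζ) := by rw [show (1-ζ) = ζ^5 from hz5.symm, ← pow_mul, hmod] <;> norm_num [hrel, hz3, hz4, hz5]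
private lemma W21 : (1-ζ)^21 = (-1) := by rw [show (1-ζ) = ζ^5 from hz5.symm, ← pow_mul, hmod] <;> norm_num [hrel, hz3, hz4, hz5]
private lemma W22 : (1-ζ)^22 = (ζ - 1) := by rw [show (1-ζ) = ζ^5 from hz5.symm, ← pow_mul, hmod] <;> norm_num [hrel, hz3, hz4, hz5]
private lemma W23 : (1-ζ)^23 = ζ := by rw [show (1-ζ) = ζ^5 from hz5.symm, ← pow_mul, hmod] <;> norm_num [hrel, hz3, hz4, hz5]
private lemma W24 : (1-ζ)^24 = 1 := by rw [show (1-ζ) = ζ^5 from hz5.symm, ← pow_mul, hmod] <;> norm_num [hrel, hz3, hz4, hz5]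
private lemma W25 : (1-ζ)^25 = (1 - ζ) := by rw [show (1-ζ) = ζ^5 from hz5.symm, ← pow_mul, hmod] <;> norm_num [hrel, hz3, hz4, hz5]

private lemma v0 : ((0:Fin 6):ℕ) = 0 := rfl
private lemma v1 : ((1:Fin 6):ℕ) = 1 := rfl
private lemma v2 : ((2:Fin 6):ℕ) = 2 := rfl
private lemma v3 : ((3:Fin 6):ℕ) = 3 := rfl
private lemma v4 : ((4:Fin 6):ℕ) = 4 := rfl
private lemma v5 : ((5:Fin 6):ℕ) = 5 := rfl

set_option maxHeartbeats 4000000 in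
/-- For all real `a, b`, the matrix `F₆⁽²⁾(a,b)` is a dephased complex
Hadamard matrix of order `6`. -/
theorem F6fam_hadamard (a b : ℝ) :
    IsComplexHadamard (F6fam a b) ∧ IsDephased (F6fam a b) 0 := by
  have hX := Complex.exp_ne_zero (Complex.I * a)
  have hY := Complex.exp_ne_zero (Complex.I * b)
  refine ⟨⟨?_, ?_⟩, ?_, ?_⟩
  · -- modulus one
    intro i j
    rw [F6_apply, norm_mul, norm_pow, habsζ, one_pow, one_mul]
    split_ifs <;>
      simp [Complex.norm_exp, Complex.mul_re]
  · -- unitarity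
    ext i j
    fin_cases i <;> fin_cases j <;>
    · norm_num [Matrix.mul_apply, Matrix.conjTranspose_apply, F6_apply, Fin.sum_univ_six,
        Fin.isValue, v0, v1, v2, v3, v4, v5, Matrix.smul_apply, Matrix.one_apply, Fin.ext_iff]
      try simp only [map_mul, map_one, map_pow, hconjζ, starexp,
        Z2, Z3, Z4, Z5, Z6, Z7, Z8, Z9, Z10, Z11, Z12, Z13, Z14, Z15, Z16, Z17, Z18, Z19,
        Z20, Z21, Z22, Z23, Z24, Z25,
        W2, W3, W4, W5, W6, W7, W8, W9, W10, W11, W12, W13, W14, W15, W16, W17, W18, W19,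
        W20, W21, W22, W23, W24, W25]
      try field_simp
      try ring_nf
      try simp only [hrel]
      try ring
  · -- first row
    intro j
    simp [F6_apply, v0]
  · -- first column
    intro i
    simp [F6_apply, v0, mul_zero]
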